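/- Let F be γ-strongly convex differentiable on ℝ^k with minimizer θ_F, and F' be convex differentiable with minimizer θ_{F'}. Suppose ⟨θ_F − θ_{F'}, ∇F(θ_{F'}) − ∇F'(θ_{F'})⟩ ≥ −K‖θ_F − θ_{F'}‖ for some K ≥ 0. Then ‖θ_F − θ_{F'}‖ ≤ K/γ. -/
import Mathlib


open scoped RealInnerProductSpace

theorem stmt15 {k : ℕ} (γ K : ℝ) (hγ : 0 < γ) (hK : 0 ≤ K)
    (F F' : EuclideanSpace ℝ (Fin k) → ℝ)
    (gF gF' : EuclideanSpace ℝ (Fin k) → EuclideanSpace ℝ (Fin k))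
    -- F is γ-strongly convex (gradient form)
    (hFsc : ∀ u v, F u ≥ F v + ⟪gF v, u - v⟫ + γ / 2 * ‖u - v‖ ^ 2)
    -- F' is convex (gradient form)
    (hF'c : ∀ u v, F' u ≥ F' v + ⟪gF' v, u - v⟫)
    (θF θF' : EuclideanSpace ℝ (Fin k))
    (hθF : IsMinOn F Set.univ θF) (hgF : gF θF = 0)
    (hθF' : IsMinOn F' Set.univ θF') (hgF' : gF' θF' = 0)
    (hip : ⟪θF - θF', gF θF' - gF' θF'⟫ ≥ -K * ‖θF - θF'‖) :
    ‖θF - θF'‖ ≤ K / γ := by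
  set d := θF - θF' with hd
  have h1 := hFsc θF θF'
  have h2 := hFsc θF' θF
  rw [hgF, inner_zero_left] at h2
  have hnorm : ‖θF' - θF‖ = ‖d‖ := by rw [hd, ← norm_neg, neg_sub]
  rw [hnorm] at h2
  have hsum : ⟪gF θF', d⟫ + γ * ‖d‖ ^ 2 ≤ 0 := by nlinarith
  have hip' : ⟪d, gF θF'⟫ ≥ -K * ‖d‖ := by
    rw [hgF', sub_zero] at hip; exact hip
  rw [real_inner_comm] at hip'
  have key : γ * ‖d‖ ^ 2 ≤ K * ‖d‖ := by nlinarith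
  rcases eq_or_lt_of_le (norm_nonneg d) with h0 | h0
  · rw [← h0]; positivity
  · rw [le_div_iff₀ hγ]
    nlinarith
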